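/- arXiv:1605.07830 — 2 statements merged into one kernel-verified Lean document; each statement's English description precedes it below -/
import Mathlib

section
/- Let f : [0,1]^d → ℝ be continuously differentiable, fix i ∈ {1,…,d}, and assume the total variance D > 0. Then S_i^tot ≤ ς_i / D, where ς_i = (1/2)∫_{H^d} x_i(1−x_i)(∂f/∂x_i(x))² dx (upper bound UB2). -/
open MeasureTheory Real

noncomputable section

/-- The unit cube `[0,1]^d` in `ℝ^d`. -/
def unitCube (d : ℕ) : Set (Fin d → ℝ) := Set.Icc 0 1

/-- The partial derivative `∂f/∂x_i` at the point `x`. -/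
def pderivI {d : ℕ} (f : (Fin d → ℝ) → ℝ) (i : Fin d) (x : Fin d → ℝ) : ℝ :=
  deriv (fun t : ℝ => f (Function.update x i t)) (x i)

/-- `u_i(x) = f(x) - ∫₀¹ f(x₁,…,x_{i-1},t,x_{i+1},…,x_d) dt`, the sum of all ANOVA
terms of `f` depending on `x_i`. -/
def uComp {d : ℕ} (f : (Fin d → ℝ) → ℝ) (i : Fin d) (x : Fin d → ℝ) : ℝ :=
  f x - ∫ t in (0:ℝ)..1, f (Function.update x i t)

/-- The total variance `D = ∫ f² dx − (∫ f dx)²` over the unit cube. -/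
def totVar {d : ℕ} (f : (Fin d → ℝ) → ℝ) : ℝ :=
  (∫ x in unitCube d, (f x) ^ 2) - (∫ x in unitCube d, f x) ^ 2

/-- The total partial variance `D_i^tot = ∫ u_i² dx`. -/
def DTot {d : ℕ} (f : (Fin d → ℝ) → ℝ) (i : Fin d) : ℝ :=
  ∫ x in unitCube d, (uComp f i x) ^ 2

/-- The total Sobol' sensitivity index `S_i^tot = D_i^tot / D`. -/
def STot {d : ℕ} (f : (Fin d → ℝ) → ℝ) (i : Fin d) : ℝ :=
  DTot f i / totVar f

/-- The DGSM `ν_i = ∫ (∂f/∂x_i)² dx`. -/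
def nuDGSM {d : ℕ} (f : (Fin d → ℝ) → ℝ) (i : Fin d) : ℝ :=
  ∫ x in unitCube d, (pderivI f i x) ^ 2

/-- The DGSM `w_i^{(m)} = ∫ x_i^m (∂f/∂x_i) dx`. -/
def wDGSM {d : ℕ} (f : (Fin d → ℝ) → ℝ) (i : Fin d) (m : ℝ) : ℝ :=
  ∫ x in unitCube d, (x i) ^ m * pderivI f i x

/-- The DGSM `ς_i = (1/2) ∫ x_i (1 - x_i) (∂f/∂x_i)² dx`. -/
def sigmaDGSM {d : ℕ} (f : (Fin d → ℝ) → ℝ) (i : Fin d) : ℝ :=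
  (1 / 2) * ∫ x in unitCube d, x i * (1 - x i) * (pderivI f i x) ^ 2

end

/-!
The one-dimensional core is the weighted Poincaré inequality
`∫₀¹ (g - ∫₀¹ g)² ≤ ½ ∫₀¹ t (1 - t) g'(t)² dt`. Writing the variance as
`½ ∫∫ (g t - g s)²` and bounding `(g t - g s)² ≤ (t - s) (G t - G s)` by Cauchy–Schwarz, where
`G` is a primitive of `g'²`, the right-hand side is again a covariance, `∫ (t - ½) G t dt`,
which one integration by parts turns into `½ ∫ t (1 - t) g'(t)² dt`. Since `u_i` restricted to a
line parallel to the `i`-th axis is exactly `g - ∫₀¹ g` for the restriction `g` of `f`, the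
theorem follows by integrating the one-dimensional inequality over the remaining coordinates.
-/

theorem intervalIntegral_integral_sub_mul_sub {φ ψ : ℝ → ℝ} (hφ : Continuous φ)
    (hψ : Continuous ψ) (a b : ℝ) :
    ∫ t in a..b, ∫ s in a..b, (φ t - φ s) * (ψ t - ψ s)
      = 2 * ((b - a) * ∫ t in a..b, φ t * ψ t) - 2 * ((∫ t in a..b, φ t) * ∫ t in a..b, ψ t) := by
  have hint : ∀ {F : ℝ → ℝ}, Continuous F → IntervalIntegrable F volume a b :=
    fun h => h.intervalIntegrable a b
  have inner : ∀ t, ∫ s in a..b, (φ t - φ s) * (ψ t - ψ s)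
      = (b - a) * (φ t * ψ t) - φ t * (∫ s in a..b, ψ s) - ψ t * (∫ s in a..b, φ s)
        + ∫ s in a..b, φ s * ψ s := by
    intro t
    have e : ∀ s, (φ t - φ s) * (ψ t - ψ s)
        = φ t * ψ t - φ t * ψ s - ψ t * φ s + φ s * ψ s := fun s => by ring
    simp_rw [e]
    rw [intervalIntegral.integral_add (hint (by fun_prop)) (hint (by fun_prop)),
      intervalIntegral.integral_sub (hint (by fun_prop)) (hint (by fun_prop)),
      intervalIntegral.integral_sub (hint (by fun_prop)) (hint (by fun_prop)),
      intervalIntegral.integral_const, intervalIntegral.integral_const_mul,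
      intervalIntegral.integral_const_mul, smul_eq_mul]
  simp_rw [inner]
  rw [intervalIntegral.integral_add (hint (by fun_prop)) (hint (by fun_prop)),
    intervalIntegral.integral_sub (hint (by fun_prop)) (hint (by fun_prop)),
    intervalIntegral.integral_sub (hint (by fun_prop)) (hint (by fun_prop)),
    intervalIntegral.integral_const, intervalIntegral.integral_const_mul,
    intervalIntegral.integral_mul_const, intervalIntegral.integral_mul_const, smul_eq_mul]
  ring

theorem sq_intervalIntegral_le_mul_integral_sq {h : ℝ → ℝ} (hh : Continuous h) (s t : ℝ) :
    (∫ r in s..t, h r) ^ 2 ≤ (t - s) * ∫ r in s..t, h r ^ 2 := by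
  wlog hst : s ≤ t generalizing s t
  · have := this t s (le_of_not_ge hst)
    rw [intervalIntegral.integral_symm s t, intervalIntegral.integral_symm s t] at this
    linarith
  have hsq := intervalIntegral_integral_sub_mul_sub hh hh s t
  have hnonneg : 0 ≤ ∫ u in s..t, ∫ v in s..t, (h u - h v) * (h u - h v) :=
    intervalIntegral.integral_nonneg hst fun u _ =>
      intervalIntegral.integral_nonneg hst fun v _ => mul_self_nonneg _
  simp only [← sq] at hsq hnonneg
  linarith

theorem sq_sub_le_mul_integral_deriv_sq {g : ℝ → ℝ} (hg : ContDiff ℝ 1 g) (s t : ℝ) :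
    (g t - g s) ^ 2 ≤ (t - s) * ∫ r in s..t, deriv g r ^ 2 := by
  rw [← intervalIntegral.integral_deriv_eq_sub (fun x _ => hg.differentiable one_ne_zero x)
    ((hg.continuous_deriv le_rfl).intervalIntegrable s t)]
  exact sq_intervalIntegral_le_mul_integral_sq (hg.continuous_deriv le_rfl) s t

theorem integral_sub_half_mul_primitive {φ : ℝ → ℝ} (hφ : Continuous φ) :
    ∫ t in (0:ℝ)..1, (t - 1 / 2) * ∫ r in (0:ℝ)..t, φ r
      = (1 / 2) * ∫ t in (0:ℝ)..1, t * (1 - t) * φ t := by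
  have hu : ∀ t, HasDerivAt (fun t : ℝ => (t ^ 2 - t) / 2) (t - 1 / 2) t := fun t => by
    simpa [sub_div] using ((hasDerivAt_pow 2 t).sub (hasDerivAt_id t)).div_const 2
  have hibp := intervalIntegral.integral_mul_deriv_eq_deriv_mul (a := 0) (b := 1)
    (fun t _ => hu t) (fun t _ => (hφ.integral_hasStrictDerivAt 0 t).hasDerivAt)
    (Continuous.intervalIntegrable (by fun_prop) _ _) (hφ.intervalIntegrable _ _)
  norm_num at hibp
  rw [← neg_neg (∫ t in (0:ℝ)..1, (t - 1 / 2) * ∫ r in (0:ℝ)..t, φ r), ← hibp,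
    ← intervalIntegral.integral_const_mul, ← intervalIntegral.integral_neg]
  congr 1 with t
  ring

theorem integral_sub_average_sq_le {g : ℝ → ℝ} (hg : ContDiff ℝ 1 g) :
    ∫ t in (0:ℝ)..1, (g t - ∫ s in (0:ℝ)..1, g s) ^ 2
      ≤ (1 / 2) * ∫ t in (0:ℝ)..1, t * (1 - t) * deriv g t ^ 2 := by
  have hg' : Continuous fun r => deriv g r ^ 2 := (hg.continuous_deriv le_rfl).pow 2
  set A := ∫ s in (0:ℝ)..1, g s with hA
  set G : ℝ → ℝ := fun t => ∫ r in (0:ℝ)..t, deriv g r ^ 2 with hGdef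
  have hG : Continuous G :=
    intervalIntegral.continuous_primitive (fun _ _ => hg'.intervalIntegrable _ _) 0
  have hvar : ∫ t in (0:ℝ)..1, ∫ s in (0:ℝ)..1, (g t - g s) * (g t - g s)
      = 2 * ∫ t in (0:ℝ)..1, (g t - A) ^ 2 := by
    have hmean : ∫ t in (0:ℝ)..1, (g t - A) = 0 := by
      simp [intervalIntegral.integral_sub (hg.continuous.intervalIntegrable 0 1) intervalIntegrable_const, ← hA]
    simpa [hmean, sq] using intervalIntegral_integral_sub_mul_sub (φ := fun t => g t - A)
      (ψ := fun t => g t - A) (by fun_prop) (by fun_prop) 0 1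
  have hweight : ∫ t in (0:ℝ)..1, ∫ s in (0:ℝ)..1, (t - s) * (G t - G s)
      = 2 * ∫ t in (0:ℝ)..1, (t - 1 / 2) * G t := by
    have hmean : ∫ t in (0:ℝ)..1, (t - 1 / 2) = 0 := by
      simp [intervalIntegral.integral_sub, integral_id]
    simpa [hmean] using intervalIntegral_integral_sub_mul_sub (φ := fun t => t - 1 / 2)
      (by fun_prop) hG 0 1
  have hmono : ∫ t in (0:ℝ)..1, ∫ s in (0:ℝ)..1, (g t - g s) * (g t - g s)
      ≤ ∫ t in (0:ℝ)..1, ∫ s in (0:ℝ)..1, (t - s) * (G t - G s) := by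
    refine intervalIntegral.integral_mono_on zero_le_one
      ((intervalIntegral.continuous_parametric_intervalIntegral_of_continuous'
        (by fun_prop) 0 1).intervalIntegrable 0 1)
      ((intervalIntegral.continuous_parametric_intervalIntegral_of_continuous'
        (by fun_prop) 0 1).intervalIntegrable 0 1) fun t _ => ?_
    refine intervalIntegral.integral_mono_on zero_le_one
      (Continuous.intervalIntegrable (by fun_prop) _ _)
      (Continuous.intervalIntegrable (by fun_prop) _ _) fun s _ => ?_
    rw [← sq, hGdef, intervalIntegral.integral_interval_sub_left (hg'.intervalIntegrable _ _)
      (hg'.intervalIntegrable _ _)]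
    exact sq_sub_le_mul_integral_deriv_sq hg s t
  linarith [integral_sub_half_mul_primitive hg']

theorem continuous_intervalIntegral_update {d : ℕ} {h : (Fin d → ℝ) → ℝ} (hh : Continuous h)
    (i : Fin d) (a b : ℝ) : Continuous fun x => ∫ t in a..b, h (Function.update x i t) :=
  intervalIntegral.continuous_parametric_intervalIntegral_of_continuous' (by fun_prop) a b

theorem setIntegral_unitCube_eq_integral_insertNth {n : ℕ} (i : Fin (n + 1))
    {h : (Fin (n + 1) → ℝ) → ℝ} (hh : Continuous h) :
    ∫ x in unitCube (n + 1), h x = ∫ y in unitCube n, ∫ t in (0:ℝ)..1, h (i.insertNth t y) := by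
  let e := (MeasurableEquiv.piFinSuccAbove (fun _ => ℝ) i).symm
  have he : MeasurePreserving e := (volume_preserving_piFinSuccAbove (fun _ => ℝ) i).symm _
  have hpre : e ⁻¹' unitCube (n + 1) = Set.Icc (0:ℝ) 1 ×ˢ unitCube n :=
    ((Fin.insertNthOrderIso (fun _ => ℝ) i).preimage_Icc _ _).trans (Set.Icc_prod_eq _ _)
  rw [← he.setIntegral_preimage_emb e.measurableEmbedding, hpre, Measure.volume_eq_prod,
    ← setIntegral_prod_swap, setIntegral_prod]
  · refine setIntegral_congr_fun measurableSet_Icc fun y _ => ?_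
    rw [intervalIntegral.integral_of_le zero_le_one, integral_Icc_eq_integral_Ioc]
    rfl
  · have hc : Continuous fun p : (Fin n → ℝ) × ℝ => h (i.insertNth p.2 p.1) := by fun_prop
    exact hc.continuousOn.integrableOn_compact (isCompact_Icc.prod isCompact_Icc)

theorem setIntegral_unitCube_eq_integral_update {d : ℕ} (i : Fin d) {h : (Fin d → ℝ) → ℝ}
    (hh : Continuous h) :
    ∫ x in unitCube d, h x = ∫ x in unitCube d, ∫ t in (0:ℝ)..1, h (Function.update x i t) := by
  obtain ⟨n, rfl⟩ := Nat.exists_eq_add_one_of_ne_zero i.pos.ne'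
  rw [setIntegral_unitCube_eq_integral_insertNth i hh,
    setIntegral_unitCube_eq_integral_insertNth i (continuous_intervalIntegral_update hh i 0 1)]
  simp only [Fin.update_insertNth, intervalIntegral.integral_const, sub_zero, one_smul]

theorem setIntegral_unitCube_mono_of_integral_update_le {d : ℕ} (i : Fin d)
    {h₁ h₂ : (Fin d → ℝ) → ℝ} (hh₁ : Continuous h₁) (hh₂ : Continuous h₂)
    (hle : ∀ x, ∫ t in (0:ℝ)..1, h₁ (Function.update x i t)
      ≤ ∫ t in (0:ℝ)..1, h₂ (Function.update x i t)) :
    ∫ x in unitCube d, h₁ x ≤ ∫ x in unitCube d, h₂ x := by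
  rw [setIntegral_unitCube_eq_integral_update i hh₁, setIntegral_unitCube_eq_integral_update i hh₂]
  exact setIntegral_mono
    ((continuous_intervalIntegral_update hh₁ i 0 1).continuousOn.integrableOn_compact
      isCompact_Icc)
    ((continuous_intervalIntegral_update hh₂ i 0 1).continuousOn.integrableOn_compact
      isCompact_Icc) hle

section

variable {d : ℕ} {f : (Fin d → ℝ) → ℝ} {i : Fin d}

theorem continuous_uComp (hf : Continuous f) : Continuous (uComp f i) :=
  hf.sub (continuous_intervalIntegral_update hf i 0 1)

theorem pderivI_eq_fderiv {x : Fin d → ℝ} (hf : DifferentiableAt ℝ f x) :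
    pderivI f i x = fderiv ℝ f x (Pi.single i 1) := by
  rw [← Function.update_eq_self i x] at hf
  have h := hf.hasFDerivAt.comp_hasDerivAt (x i) (hasDerivAt_update x i (x i))
  rw [Function.update_eq_self] at h
  exact h.deriv

theorem continuous_pderivI (hf : ContDiff ℝ 1 f) : Continuous (pderivI f i) := by
  rw [show pderivI f i = fun x => fderiv ℝ f x (Pi.single i 1) from
    funext fun x => pderivI_eq_fderiv (hf.differentiable one_ne_zero x)]
  exact (hf.continuous_fderiv one_ne_zero).clm_apply continuous_const

end

/-- **Theorem 5 (upper bound UB2).** For `f` continuously differentiable on the unit cube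
with `D > 0`, the total Sobol' index satisfies `S_i^tot ≤ ς_i / D`, where
`ς_i = (1/2) ∫ x_i (1 − x_i) (∂f/∂x_i)² dx`. -/
theorem dgsm_upper_bound_UB2 (d : ℕ) (f : (Fin d → ℝ) → ℝ) (hf : ContDiff ℝ 1 f)
    (i : Fin d) (hD : 0 < totVar f) :
    STot f i ≤ sigmaDGSM f i / totVar f := by
  rw [STot, div_le_div_iff_of_pos_right hD, DTot, sigmaDGSM, ← integral_const_mul]
  have hpderiv := continuous_pderivI (i := i) hf
  refine setIntegral_unitCube_mono_of_integral_update_le i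
    ((continuous_uComp hf.continuous).pow 2) (by fun_prop) fun x => ?_
  simpa [uComp, pderivI, intervalIntegral.integral_const_mul, mul_assoc] using
    integral_sub_average_sq_le (g := fun t => f (Function.update x i t))
      (hf.comp (contDiff_update 1 x i))
end

section
/- Fix i and suppose the i-th input is Gaussian with variance σ_i² > 0. Assume f ∈ L²(μ), ∂f/∂x_i ∈ L²(μ), and D > 0. Then S_i^tot ≤ σ_i² ν_i / D, where ν_i = ∫_{ℝ^d} (∂f/∂x_i)² dμ. -/
open MeasureTheory ProbabilityTheory
open scoped NNReal

noncomputable section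

/-- `u_i(x) = f(x) − ∫_ℝ f(x₁,…,x_{i−1},t,x_{i+1},…,x_d) dμ_i(t)`, the sum of all ANOVA
terms of `f` depending on `x_i`, for independent inputs with marginal laws `μs j`. -/
def uCompM {d : ℕ} (μs : Fin d → Measure ℝ) (f : (Fin d → ℝ) → ℝ) (i : Fin d)
    (x : Fin d → ℝ) : ℝ :=
  f x - ∫ t, f (Function.update x i t) ∂(μs i)

/-- The total variance `D = ∫ f² dμ − (∫ f dμ)²` with respect to the product measure. -/
def totVarM {d : ℕ} (μs : Fin d → Measure ℝ) (f : (Fin d → ℝ) → ℝ) : ℝ :=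
  (∫ x, (f x) ^ 2 ∂(Measure.pi μs)) - (∫ x, f x ∂(Measure.pi μs)) ^ 2

/-- The total partial variance `D_i^tot = ∫ u_i² dμ`. -/
def DTotM {d : ℕ} (μs : Fin d → Measure ℝ) (f : (Fin d → ℝ) → ℝ) (i : Fin d) : ℝ :=
  ∫ x, (uCompM μs f i x) ^ 2 ∂(Measure.pi μs)

/-- The total Sobol' sensitivity index `S_i^tot = D_i^tot / D`. -/
def STotM {d : ℕ} (μs : Fin d → Measure ℝ) (f : (Fin d → ℝ) → ℝ) (i : Fin d) : ℝ :=
  DTotM μs f i / totVarM μs f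

/-- The DGSM `ν_i = ∫ (∂f/∂x_i)² dμ`. -/
def nuM {d : ℕ} (μs : Fin d → Measure ℝ) (f : (Fin d → ℝ) → ℝ) (i : Fin d) : ℝ :=
  ∫ x, (pderivI f i x) ^ 2 ∂(Measure.pi μs)

/-- The DGSM `w_i = ∫ (∂f/∂x_i) dμ`. -/
def wM {d : ℕ} (μs : Fin d → Measure ℝ) (f : (Fin d → ℝ) → ℝ) (i : Fin d) : ℝ :=
  ∫ x, pderivI f i x ∂(Measure.pi μs)

/-!
Conditionally on the other inputs, `u_i` is the centred slice `t ↦ f (update x i t)`, so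
`D_i^tot` is the average over `x` of the variance of that slice under `N(m, σ²)`, and the claim
reduces to the one-dimensional Gaussian Poincaré inequality `Var g ≤ σ² E[g'²]`. For the latter,
bound `Var g` by `E[(g - g m)²]`, write `g x - g m = ∫_m^x g'` and apply Cauchy–Schwarz, then swap
the two integrals: the weight `∫_{t ∈ Ι m x} |x - m| φ(x) dx` collapses to `σ² φ(t)` because
`(x - m) φ = -σ² φ'` for the Gaussian density `φ`.
-/

open Set Function Real
open scoped ENNReal Interval

theorem sq_lintegral_le_measure_univ_mul_lintegral_sq {α : Type*} [MeasurableSpace α]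
    (μ : Measure α) {f : α → ℝ≥0∞} (hf : AEMeasurable f μ) :
    (∫⁻ x, f x ∂μ) ^ 2 ≤ μ univ * ∫⁻ x, f x ^ 2 ∂μ := by
  have hCS := ENNReal.lintegral_mul_le_Lp_mul_Lq μ Real.HolderConjugate.two_two hf
    (aemeasurable_const (b := 1))
  simp only [Pi.mul_apply, mul_one, ENNReal.one_rpow, lintegral_const, one_mul] at hCS
  calc (∫⁻ x, f x ∂μ) ^ 2
      ≤ ((∫⁻ x, f x ^ (2 : ℝ) ∂μ) ^ (1 / 2 : ℝ) * μ univ ^ (1 / 2 : ℝ)) ^ 2 := by gcongr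
    _ = μ univ * ∫⁻ x, f x ^ 2 ∂μ := by
      rw [mul_pow, ← ENNReal.rpow_two, ← ENNReal.rpow_mul, ← ENNReal.rpow_two, ← ENNReal.rpow_mul]
      norm_num [mul_comm]

theorem ofReal_sq_sub_le_mul_setLIntegral_deriv_sq {g : ℝ → ℝ} (hg : ContDiff ℝ 1 g) (a b : ℝ) :
    ENNReal.ofReal ((g b - g a) ^ 2)
      ≤ ENNReal.ofReal |b - a| * ∫⁻ t in Ι a b, ENNReal.ofReal (deriv g t ^ 2) := by
  have hg' : Continuous (deriv g) := hg.continuous_deriv le_rfl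
  have hftc : g b - g a = ∫ t in a..b, deriv g t :=
    (intervalIntegral.integral_deriv_eq_sub
      (fun t _ => (hg.differentiable one_ne_zero).differentiableAt)
      (hg'.intervalIntegrable a b)).symm
  have henorm : ‖g b - g a‖ₑ ≤ ∫⁻ t in Ι a b, ‖deriv g t‖ₑ := by
    rw [hftc, Real.enorm_eq_ofReal_abs, intervalIntegral.abs_integral_eq_abs_integral_uIoc,
      ← Real.enorm_eq_ofReal_abs]
    exact enorm_integral_le_lintegral_enorm _
  have hsq : ∀ x : ℝ, ENNReal.ofReal (x ^ 2) = ‖x‖ₑ ^ 2 := fun x => by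
    rw [← enorm_pow, Real.enorm_of_nonneg (sq_nonneg x)]
  calc ENNReal.ofReal ((g b - g a) ^ 2) = ‖g b - g a‖ₑ ^ 2 := hsq _
    _ ≤ (∫⁻ t in Ι a b, ‖deriv g t‖ₑ) ^ 2 := by gcongr
    _ ≤ volume (Ι a b) * ∫⁻ t in Ι a b, ‖deriv g t‖ₑ ^ 2 := by
      simpa only [Measure.restrict_apply_univ] using
        sq_lintegral_le_measure_univ_mul_lintegral_sq (volume.restrict (Ι a b))
          hg'.enorm.aemeasurable
    _ = ENNReal.ofReal |b - a| * ∫⁻ t in Ι a b, ENNReal.ofReal (deriv g t ^ 2) := by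
      simp only [Real.volume_uIoc, hsq]

theorem lintegral_setLIntegral_swap {α β : Type*} [MeasurableSpace α] [MeasurableSpace β]
    {μ : Measure α} {ν : Measure β} [SFinite μ] [SFinite ν] {S : Set (α × β)}
    (hS : MeasurableSet S) {F : α → β → ℝ≥0∞} (hF : Measurable (uncurry F)) :
    ∫⁻ x, ∫⁻ y in Prod.mk x ⁻¹' S, F x y ∂ν ∂μ
      = ∫⁻ y, ∫⁻ x in (fun x => (x, y)) ⁻¹' S, F x y ∂μ ∂ν := by
  have hind : ∀ x y, S.indicator (uncurry F) (x, y) = (Prod.mk x ⁻¹' S).indicator (F x) y :=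
    fun _ _ => rfl
  have hind' : ∀ x y, S.indicator (uncurry F) (x, y)
      = ((fun x => (x, y)) ⁻¹' S).indicator (fun x => F x y) x := fun _ _ => rfl
  simp_rw [← lintegral_indicator (measurable_prodMk_left hS),
    ← lintegral_indicator (measurable_prodMk_right hS), ← hind, ← hind']
  exact lintegral_lintegral_swap ((hF.indicator hS).comp_aemeasurable measurable_id.aemeasurable)

theorem lintegral_pi_le_of_forall_lintegral_update_le {ι : Type*} [Fintype ι] [DecidableEq ι]
    {X : ι → Type*} [∀ i, MeasurableSpace (X i)] {μ : ∀ i, Measure (X i)}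
    [∀ i, SigmaFinite (μ i)] {F G : (∀ i, X i) → ℝ≥0∞} (hF : Measurable F) (hG : Measurable G)
    (i : ι) (h : ∀ x, ∫⁻ t, F (update x i t) ∂μ i ≤ ∫⁻ t, G (update x i t) ∂μ i) :
    ∫⁻ x, F x ∂Measure.pi μ ≤ ∫⁻ x, G x ∂Measure.pi μ :=
  lintegral_le_of_lmarginal_le {i} hF hG (by rw [lmarginal_singleton, lmarginal_singleton]; exact h)

namespace ProbabilityTheory

theorem evariance_le_lintegral_sq_sub {Ω : Type*} [MeasurableSpace Ω] {μ : Measure Ω}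
    [IsProbabilityMeasure μ] {X : Ω → ℝ} (hX : AEStronglyMeasurable X μ) (c : ℝ) :
    evariance X μ ≤ ∫⁻ ω, ENNReal.ofReal ((X ω - c) ^ 2) ∂μ := by
  by_cases hfin : ∫⁻ ω, ENNReal.ofReal ((X ω - c) ^ 2) ∂μ = ∞
  · exact hfin ▸ le_top
  have hXc : AEStronglyMeasurable (fun ω => X ω - c) μ := hX.sub aestronglyMeasurable_const
  have hsq : Integrable (fun ω => (X ω - c) ^ 2) μ :=
    (lintegral_ofReal_ne_top_iff_integrable (hXc.pow 2) (ae_of_all _ fun _ => sq_nonneg _)).mp hfin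
  have hX2 : MemLp X 2 μ := by
    simpa [Pi.add_def] using ((memLp_two_iff_integrable_sq hXc).mpr hsq).add (memLp_const c)
  rw [← ofReal_variance hX2, ← variance_sub_const hX c,
    ← ofReal_integral_eq_lintegral_ofReal hsq (ae_of_all _ fun _ => sq_nonneg _)]
  exact ENNReal.ofReal_le_ofReal (variance_le_expectation_sq hXc)

variable {m : ℝ} {v : ℝ≥0}

theorem hasDerivAt_gaussianPDFReal (x : ℝ) :
    HasDerivAt (gaussianPDFReal m v) (-((x - m) / v) * gaussianPDFReal m v x) x := by
  have hexponent : HasDerivAt (fun y : ℝ => -(y - m) ^ 2 / (2 * v)) (-((x - m) / v)) x := by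
    refine (((hasDerivAt_id x).sub_const m).fun_pow 2).fun_neg.div_const (2 * (v : ℝ))
      |>.congr_deriv ?_
    rw [neg_div, id, mul_comm (2 : ℝ) v, ← div_div]
    ring
  rw [gaussianPDFReal_def]
  exact (hexponent.exp.const_mul _).congr_deriv (by ring)

theorem hasDerivAt_neg_var_mul_gaussianPDFReal (hv : v ≠ 0) (x : ℝ) :
    HasDerivAt (fun y => -(v : ℝ) * gaussianPDFReal m v y) ((x - m) * gaussianPDFReal m v x) x :=
  ((hasDerivAt_gaussianPDFReal x).const_mul _).congr_deriv (by field_simp)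

theorem integrable_sub_mul_gaussianPDFReal (hv : v ≠ 0) :
    Integrable (fun x => (x - m) * gaussianPDFReal m v x) := by
  have hb : (0 : ℝ) < (2 * v : ℝ)⁻¹ := by positivity
  refine ((integrable_mul_exp_neg_mul_sq hb).const_mul (√(2 * π * v))⁻¹).comp_sub_right m
    |>.congr (ae_of_all _ fun x => ?_)
  simp only [gaussianPDFReal]
  rw [show -(2 * (v : ℝ))⁻¹ * (x - m) ^ 2 = -(x - m) ^ 2 / (2 * v) by ring]
  ring

theorem integral_Ioi_sub_mul_gaussianPDFReal (hv : v ≠ 0) (t : ℝ) :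
    ∫ x in Ioi t, (x - m) * gaussianPDFReal m v x = v * gaussianPDFReal m v t := by
  have hderiv := hasDerivAt_neg_var_mul_gaussianPDFReal (m := m) hv
  have hint := (integrable_sub_mul_gaussianPDFReal (m := m) hv).integrableOn (s := Ioi t)
  have hlim := tendsto_zero_of_hasDerivAt_of_integrableOn_Ioi (fun x _ => hderiv x) hint
    ((integrable_gaussianPDFReal m v).const_mul _).integrableOn
  rw [integral_Ioi_of_hasDerivAt_of_tendsto' (fun x _ => hderiv x) hint hlim]
  ring

theorem integral_Iic_sub_mul_gaussianPDFReal (hv : v ≠ 0) (t : ℝ) :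
    ∫ x in Iic t, (m - x) * gaussianPDFReal m v x = v * gaussianPDFReal m v t := by
  have hderiv := hasDerivAt_neg_var_mul_gaussianPDFReal (m := m) hv
  have hint := (integrable_sub_mul_gaussianPDFReal (m := m) hv).integrableOn (s := Iic t)
  have hlim := tendsto_zero_of_hasDerivAt_of_integrableOn_Iic (fun x _ => hderiv x) hint
    ((integrable_gaussianPDFReal m v).const_mul _).integrableOn
  rw [show (fun x => (m - x) * gaussianPDFReal m v x)
      = fun x => -((x - m) * gaussianPDFReal m v x) by ext; ring,
    integral_neg, integral_Iic_of_hasDerivAt_of_tendsto' (fun x _ => hderiv x) hint hlim]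
  ring

theorem setLIntegral_abs_sub_mul_gaussianPDFReal (hv : v ≠ 0) (t : ℝ) :
    ∫⁻ x in {x | t ∈ Ι m x}, ENNReal.ofReal (|x - m| * gaussianPDFReal m v x)
      = ENNReal.ofReal (v * gaussianPDFReal m v t) := by
  have hint : Integrable (fun x => |x - m| * gaussianPDFReal m v x) :=
    (integrable_sub_mul_gaussianPDFReal (m := m) hv).abs.congr (ae_of_all _ fun x => by
      simp only [abs_mul, abs_of_nonneg (gaussianPDFReal_nonneg m v x)])
  rw [← ofReal_integral_eq_lintegral_ofReal hint.integrableOn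
    (ae_of_all _ fun x => mul_nonneg (abs_nonneg _) (gaussianPDFReal_nonneg m v x))]
  congr 1
  rcases le_or_gt t m with htm | htm
  · have hset : {x | t ∈ Ι m x} = Iio t := by
      ext x; simp only [mem_ofPred_eq, mem_uIoc, mem_Iio]; constructor <;> intro h
      · rcases h with h | h <;> linarith [h.1, h.2]
      · exact Or.inr ⟨h, htm⟩
    rw [hset, setIntegral_congr_set Iio_ae_eq_Iic, ← integral_Iic_sub_mul_gaussianPDFReal hv t]
    refine setIntegral_congr_fun measurableSet_Iic fun x (hx : x ≤ t) => ?_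
    rw [abs_of_nonpos (by linarith), neg_sub]
  · have hset : {x | t ∈ Ι m x} = Ici t := by
      ext x; simp only [mem_ofPred_eq, mem_uIoc, mem_Ici]; constructor <;> intro h
      · rcases h with h | h <;> linarith [h.1, h.2]
      · exact Or.inl ⟨htm, h⟩
    rw [hset, integral_Ici_eq_integral_Ioi, ← integral_Ioi_sub_mul_gaussianPDFReal hv t]
    refine setIntegral_congr_fun measurableSet_Ioi fun x (hx : t < x) => ?_
    rw [abs_of_pos (by linarith)]

theorem lintegral_sq_sub_apply_mean_le (hv : v ≠ 0) {g : ℝ → ℝ} (hg : ContDiff ℝ 1 g) :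
    ∫⁻ x, ENNReal.ofReal ((g x - g m) ^ 2) ∂gaussianReal m v
      ≤ ENNReal.ofReal v * ∫⁻ t, ENNReal.ofReal (deriv g t ^ 2) ∂gaussianReal m v := by
  set q : ℝ → ℝ≥0∞ := fun t => ENNReal.ofReal (deriv g t ^ 2)
  set w : ℝ → ℝ≥0∞ := fun x => ENNReal.ofReal (|x - m| * gaussianPDFReal m v x)
  have hq : Measurable q := ((hg.continuous_deriv le_rfl).pow 2).measurable.ennreal_ofReal
  have hw : Measurable w := by fun_prop
  have hgc : Continuous g := hg.continuous
  have hS : MeasurableSet {p : ℝ × ℝ | p.2 ∈ Ι m p.1} :=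
    (measurableSet_lt (by fun_prop) measurable_snd).inter
      (measurableSet_le measurable_snd (by fun_prop))
  rw [gaussianReal_of_var_ne_zero m hv,
    lintegral_withDensity_eq_lintegral_mul₀ (measurable_gaussianPDF m v).aemeasurable (by fun_prop),
    lintegral_withDensity_eq_lintegral_mul₀ (measurable_gaussianPDF m v).aemeasurable
      hq.aemeasurable]
  calc ∫⁻ x, gaussianPDF m v x * ENNReal.ofReal ((g x - g m) ^ 2)
      ≤ ∫⁻ x, gaussianPDF m v x * (ENNReal.ofReal |x - m| * ∫⁻ t in Ι m x, q t) := by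
        gcongr with x
        exact ofReal_sq_sub_le_mul_setLIntegral_deriv_sq hg m x
    _ = ∫⁻ x, ∫⁻ t in Ι m x, w x * q t := by
        refine lintegral_congr fun x => ?_
        rw [lintegral_const_mul _ hq, gaussianPDF,
          show w x = _ from ENNReal.ofReal_mul (abs_nonneg _)]
        ring
    _ = ∫⁻ t, ∫⁻ x in {x | t ∈ Ι m x}, w x * q t :=
        lintegral_setLIntegral_swap hS (by fun_prop)
    _ = ∫⁻ t, ENNReal.ofReal v * (gaussianPDF m v t * q t) := by
        refine lintegral_congr fun t => ?_
        rw [lintegral_mul_const _ hw, setLIntegral_abs_sub_mul_gaussianPDFReal hv,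
          ENNReal.ofReal_mul v.coe_nonneg, gaussianPDF]
        ring
    _ = ENNReal.ofReal v * ∫⁻ t, gaussianPDF m v t * q t :=
        lintegral_const_mul _ ((measurable_gaussianPDF m v).mul hq)

theorem evariance_le_var_mul_lintegral_deriv_sq {g : ℝ → ℝ} (hg : ContDiff ℝ 1 g) :
    evariance g (gaussianReal m v)
      ≤ ENNReal.ofReal v * ∫⁻ t, ENNReal.ofReal (deriv g t ^ 2) ∂gaussianReal m v := by
  rcases eq_or_ne v 0 with rfl | hv
  · simp [gaussianReal_zero_var, evariance_eq_lintegral_ofReal]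
  exact (evariance_le_lintegral_sq_sub hg.continuous.aestronglyMeasurable (g m)).trans
    (lintegral_sq_sub_apply_mean_le hv hg)

end ProbabilityTheory

section Slices

variable {d : ℕ} {f : (Fin d → ℝ) → ℝ} (i : Fin d)

theorem pderivI_update (x : Fin d → ℝ) (t : ℝ) :
    pderivI f i (update x i t) = deriv (fun s => f (update x i s)) t := by
  simp only [pderivI, update_idem, update_self]

theorem uCompM_update (μs : Fin d → Measure ℝ) (x : Fin d → ℝ) (t : ℝ) :
    uCompM μs f i (update x i t) = f (update x i t) - ∫ s, f (update x i s) ∂μs i := by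
  simp only [uCompM, update_idem]

variable {i}

theorem measurable_pderivI (hf : Continuous f) : Measurable (pderivI f i) :=
  (measurable_deriv_with_param (f := fun x t => f (update x i t))
    (hf.comp (continuous_fst.update i continuous_snd))).comp
    (measurable_id.prodMk (measurable_pi_apply i))

theorem measurable_uCompM (μs : Fin d → Measure ℝ) [SFinite (μs i)] (hf : Continuous f) :
    Measurable (uCompM μs f i) :=
  hf.measurable.sub ((hf.comp (continuous_fst.update i continuous_snd)).stronglyMeasurable
    |>.integral_prod_right').measurable

end Slices

theorem lintegral_uCompM_sq_le {d : ℕ} {μs : Fin d → Measure ℝ} [∀ j, SigmaFinite (μs j)]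
    {i : Fin d} {m : ℝ} {v : ℝ≥0} (hμi : μs i = gaussianReal m v) {f : (Fin d → ℝ) → ℝ}
    (hf : ContDiff ℝ 1 f) :
    ∫⁻ x, ENNReal.ofReal (uCompM μs f i x ^ 2) ∂Measure.pi μs
      ≤ ENNReal.ofReal v * ∫⁻ x, ENNReal.ofReal (pderivI f i x ^ 2) ∂Measure.pi μs := by
  have hν : Measurable fun x => ENNReal.ofReal (pderivI f i x ^ 2) :=
    ((measurable_pderivI hf.continuous).pow_const 2).ennreal_ofReal
  rw [← lintegral_const_mul _ hν]
  refine lintegral_pi_le_of_forall_lintegral_update_le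
    ((measurable_uCompM μs hf.continuous).pow_const 2).ennreal_ofReal (hν.const_mul _) i fun x => ?_
  simp only [uCompM_update, pderivI_update, hμi]
  rw [lintegral_const_mul _ ((measurable_deriv _).pow_const 2).ennreal_ofReal,
    ← evariance_eq_lintegral_ofReal]
  exact evariance_le_var_mul_lintegral_deriv_sq (hf.comp (contDiff_update 1 x i))

theorem dgsm_upper_bound_normal_general (d : ℕ) (μs : Fin d → Measure ℝ)
    (hprob : ∀ j, IsProbabilityMeasure (μs j)) (i : Fin d)
    (mi : ℝ) (v : ℝ≥0) (hμi : μs i = gaussianReal mi v)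
    (f : (Fin d → ℝ) → ℝ) (hf : ContDiff ℝ 1 f)
    (hdL2 : MemLp (pderivI f i) 2 (Measure.pi μs))
    (hD : 0 < totVarM μs f) :
    STotM μs f i ≤ (v : ℝ) * nuM μs f i / totVarM μs f := by
  have hν_fin : ∫⁻ x, ENNReal.ofReal (pderivI f i x ^ 2) ∂Measure.pi μs ≠ ∞ :=
    (lintegral_ofReal_ne_top_iff_integrable (hdL2.1.pow 2) (ae_of_all _ fun _ => sq_nonneg _)).mpr
      hdL2.integrable_sq
  have hDν : DTotM μs f i ≤ v * nuM μs f i := by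
    have h := ENNReal.toReal_mono (ENNReal.mul_ne_top ENNReal.ofReal_ne_top hν_fin)
      (lintegral_uCompM_sq_le hμi hf)
    rwa [ENNReal.toReal_mul, ENNReal.toReal_ofReal v.coe_nonneg,
      ← integral_eq_lintegral_of_nonneg_ae (ae_of_all _ fun _ => sq_nonneg _) (hdL2.1.pow 2),
      ← integral_eq_lintegral_of_nonneg_ae (ae_of_all _ fun _ => sq_nonneg _)
        ((measurable_uCompM μs hf.continuous).pow_const 2).aestronglyMeasurable] at h
  exact div_le_div_of_nonneg_right hDν hD.le

/-- **Theorem 8 (upper bound for a normal input).** For independent inputs where the `i`-th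
input is Gaussian with variance `σ_i² > 0`, and `f, ∂f/∂x_i ∈ L²(μ)` with `D > 0`, one has
`S_i^tot ≤ σ_i² ν_i / D`. -/
theorem dgsm_upper_bound_normal (d : ℕ) (μs : Fin d → Measure ℝ)
    (hprob : ∀ j, IsProbabilityMeasure (μs j)) (i : Fin d)
    (mi : ℝ) (v : ℝ≥0) (hv : v ≠ 0) (hμi : μs i = gaussianReal mi v)
    (f : (Fin d → ℝ) → ℝ) (hf : ContDiff ℝ 1 f)
    (hfL2 : MemLp f 2 (Measure.pi μs))
    (hdL2 : MemLp (pderivI f i) 2 (Measure.pi μs))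
    (hD : 0 < totVarM μs f) :
    STotM μs f i ≤ (v : ℝ) * nuM μs f i / totVarM μs f :=
  dgsm_upper_bound_normal_general d μs hprob i mi v hμi f hf hdL2 hD
end
end
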